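/- arXiv:1110.1974 — 7 statements merged into one kernel-verified Lean document; each statement's English description precedes it below -/
import Mathlib

section
/- Let M be a locally compact metric space with a continuous flow θ, and K a compact, invariant, proper subset of M. Then K is an attractor (i.e., stable and B⁺(K) is a neighbourhood of K) if and only if there exists a neighbourhood U of K such that no point z ∈ U \ K has its entire negative orbit O⁻(z) contained in U. -/
open Set Filter Metric Topology TopologicalSpace

variable {M : Type*} [MetricSpace M]

/-- The full orbit of a point under a flow. -/
def orbit (ϕ : Flow ℝ M) (x : M) : Set M := Set.range fun t => ϕ t x

/-- The positive (forward) half orbit. -/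
def posOrbit (ϕ : Flow ℝ M) (x : M) : Set M := {y | ∃ t : ℝ, 0 ≤ t ∧ ϕ t x = y}

/-- The negative (backward) half orbit. -/
def negOrbit (ϕ : Flow ℝ M) (x : M) : Set M := {y | ∃ t : ℝ, t ≤ 0 ∧ ϕ t x = y}

/-- Positive orbital saturation of a set. -/
def posSat (ϕ : Flow ℝ M) (s : Set M) : Set M := ⋃ x ∈ s, posOrbit ϕ x

/-- The ω-limit set of a point. -/
def omegaSet (ϕ : Flow ℝ M) (x : M) : Set M :=
  ⋂ t : ℝ, closure {y | ∃ s : ℝ, t ≤ s ∧ ϕ s x = y}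

/-- The α-limit set of a point. -/
def alphaSet (ϕ : Flow ℝ M) (x : M) : Set M :=
  ⋂ t : ℝ, closure {y | ∃ s : ℝ, s ≤ t ∧ ϕ s x = y}

/-- A set is invariant under the flow. -/
def flowInv (ϕ : Flow ℝ M) (s : Set M) : Prop := ∀ t : ℝ, ϕ t '' s = s

/-- Stability of a set: every neighbourhood contains a positively invariant neighbourhood. -/
def Stable (ϕ : Flow ℝ M) (K : Set M) : Prop :=
  ∀ U ∈ 𝓝ˢ K, ∃ V ∈ 𝓝ˢ K, posSat ϕ V ⊆ U

/-- The set of points whose ω-limit set is nonempty and contained in `K`. -/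
def Bplus (ϕ : Flow ℝ M) (K : Set M) : Set M :=
  {x | (omegaSet ϕ x).Nonempty ∧ omegaSet ϕ x ⊆ K}

/-- `K` is an attractor: stable and `B⁺(K)` is a neighbourhood of `K`. -/
def IsAttractor (ϕ : Flow ℝ M) (K : Set M) : Prop :=
  Stable ϕ K ∧ Bplus ϕ K ∈ 𝓝ˢ K

/-- `K` is a repeller: an attractor for the time-reversed flow. -/
def IsRepeller (ϕ : Flow ℝ M) (K : Set M) : Prop :=
  IsAttractor ϕ.reverse K

/-- A minimal set of the flow. -/
def IsMinimalSet (ϕ : Flow ℝ M) (s : Set M) : Prop :=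
  s.Nonempty ∧ IsClosed s ∧ flowInv ϕ s ∧
    ∀ t, t ⊆ s → t.Nonempty → IsClosed t → flowInv ϕ t → t = s

/-- `K` is stagnant. -/
def Stagnant (ϕ : Flow ℝ M) (K : Set M) : Prop :=
  ∃ x ∉ K, ∃ y ∉ K, (alphaSet ϕ x).Nonempty ∧ alphaSet ϕ x ⊆ K ∧
    (omegaSet ϕ y).Nonempty ∧ omegaSet ϕ y ⊆ K

/-- `K` is isolated from minimal sets. -/
def IsolatedFromMinimals (ϕ : Flow ℝ M) (K : Set M) : Prop :=
  ∃ U ∈ 𝓝ˢ K, ∀ s, s ⊆ U \ K → ¬ IsMinimalSet ϕ s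

/-- `x` is a periodic point with minimal period `p`: the set of periods is `pℤ`. -/
def MinPeriod (ϕ : Flow ℝ M) (x : M) (p : ℝ) : Prop :=
  0 < p ∧ {t : ℝ | ϕ t x = x} = {t : ℝ | ∃ n : ℤ, t = n * p}

/-- `x` is an equilibrium. -/
def IsEquilibrium (ϕ : Flow ℝ M) (x : M) : Prop := ∀ t : ℝ, ϕ t x = x

/-!
Forward direction: take a compact neighbourhood `N ⊆ B⁺(K)`. If the negative orbit of
`z ∈ N \ K` stayed in `N`, then `α(z)` would be a nonempty closed invariant subset of `N`, so
for `p ∈ α(z)` the set `ω(p)` would meet `K` inside `α(z)`. The backward orbit of `z` would then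
enter every neighbourhood of `K`, and stability (applied to `{z}ᶜ`) forbids this.

Backward direction: let `W ⊆ U` be a compact neighbourhood of `K` and `K ⊆ G ⊆ W` open. By
compactness every point of `W \ G` leaves `W` within a uniform backward time `T`, while points
near `K` stay in `G` for times in `[0, T]`. If such an orbit ever left `G`, its first exit point
would lie in `W \ G` and would have spent the preceding time `T` in `W`: so `K` is stable.
Finally, a forward orbit trapped in `W` has a nonempty invariant `ω`-limit in `W`, which must
then lie in `K`.
-/

open scoped omegaLimit

section Topological

variable {X : Type*} [TopologicalSpace X]

theorem exists_first_exit {γ : ℝ → X} (hγ : Continuous γ) {G : Set X} (hG : IsOpen G) {t : ℝ}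
    (ht : 0 ≤ t) (hγt : γ t ∉ G) : ∃ s ∈ Icc 0 t, γ s ∉ G ∧ MapsTo γ (Ico 0 s) G := by
  have hS : IsCompact (Icc 0 t ∩ γ ⁻¹' Gᶜ) :=
    isCompact_Icc.inter_right (hG.isClosed_compl.preimage hγ)
  obtain ⟨s, ⟨hst, hsG⟩, hmin⟩ := hS.exists_isLeast ⟨t, ⟨ht, le_rfl⟩, hγt⟩
  refine ⟨s, hst, hsG, fun r hr => ?_⟩
  by_contra hrG
  exact hr.2.not_ge (hmin ⟨⟨hr.1, hr.2.le.trans hst.2⟩, hrG⟩)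

variable (ϕ : Flow ℝ X)

theorem IsCompact.eventually_forall_flow_mem {S : Set ℝ} (hS : IsCompact S) {G : Set X}
    (hG : IsOpen G) {x : X} (hx : ∀ t ∈ S, ϕ t x ∈ G) : ∀ᶠ y in 𝓝 x, ∀ t ∈ S, ϕ t y ∈ G :=
  hS.eventually_forall_of_forall_eventually fun t ht =>
    (ϕ.continuous continuous_snd continuous_fst).continuousAt.preimage_mem_nhds
      (hG.mem_nhds (hx t ht))

theorem IsCompact.exists_uniform_backward_exit_time {C W : Set X} (hC : IsCompact C)
    (hW : IsClosed W) (h : ∀ y ∈ C, ∃ t ≤ 0, ϕ t y ∉ W) :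
    ∃ T ≥ 0, ∀ y ∈ C, ∃ t ∈ Icc (-T) 0, ϕ t y ∉ W := by
  let E : ℝ → Set X := fun T => ⋃ t ∈ Icc (-T) 0, ϕ t ⁻¹' Wᶜ
  have hEo : ∀ T, IsOpen (E T) := fun T =>
    isOpen_biUnion fun t _ => hW.isOpen_compl.preimage (ϕ.continuous continuous_const continuous_id)
  have hEmono : Monotone E := fun a b hab =>
    biUnion_subset_biUnion_left (Icc_subset_Icc_left (neg_le_neg hab))
  have hCE : C ⊆ ⋃ T, E T := fun y hy => by
    obtain ⟨t, ht, hty⟩ := h y hy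
    exact mem_iUnion.2 ⟨-t, mem_biUnion ⟨(neg_neg t).le, ht⟩ hty⟩
  obtain ⟨T, hT⟩ := hC.elim_directed_cover E hEo hCE hEmono.directed_le
  refine ⟨max T 0, le_max_right _ _, fun y hy => ?_⟩
  obtain ⟨t, ht, hty⟩ := mem_iUnion₂.1 (hEmono (le_max_left T 0) (hT hy))
  exact ⟨t, ht, hty⟩

end Topological

section LimitSets

variable (ϕ : Flow ℝ M)

theorem omegaSet_eq_omegaLimit (x : M) : omegaSet ϕ x = ω atTop ϕ {x} := by
  rw [omegaLimit_def, atTop_basis.biInter_mem fun _ _ h => closure_mono (image2_subset_right h)]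
  simp [omegaSet, image2_singleton_right, image]

theorem alphaSet_eq_omegaLimit (x : M) : alphaSet ϕ x = ω atBot ϕ {x} := by
  rw [omegaLimit_def, atBot_basis.biInter_mem fun _ _ h => closure_mono (image2_subset_right h)]
  simp [alphaSet, image2_singleton_right, image]

theorem posOrbit_eq_image2 (x : M) : posOrbit ϕ x = image2 ϕ (Ici 0) {x} := by
  simp [posOrbit, image2_singleton_right, image]

theorem negOrbit_eq_image2 (x : M) : negOrbit ϕ x = image2 ϕ (Iic 0) {x} := by
  simp [negOrbit, image2_singleton_right, image]

theorem isInvariant_omegaSet (x : M) : IsInvariant ϕ (omegaSet ϕ x) := by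
  rw [omegaSet_eq_omegaLimit]
  exact ϕ.isInvariant_omegaLimit _ _ fun t => tendsto_atTop_add_const_left _ t tendsto_id

theorem isInvariant_alphaSet (x : M) : IsInvariant ϕ (alphaSet ϕ x) := by
  rw [alphaSet_eq_omegaLimit]
  exact ϕ.isInvariant_omegaLimit _ _ fun t => tendsto_atBot_add_const_left _ t tendsto_id

theorem isClosed_alphaSet (x : M) : IsClosed (alphaSet ϕ x) := by
  rw [alphaSet_eq_omegaLimit]
  exact isClosed_omegaLimit _ _ _

variable {ϕ}

theorem flowInv.isInvariant {K : Set M} (hK : flowInv ϕ K) : IsInvariant ϕ K :=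
  (isInvariant_iff_image ϕ K).2 fun t => (hK t).subset

theorem IsInvariant.posOrbit_subset {S : Set M} (hS : IsInvariant ϕ S) {x : M} (hx : x ∈ S) :
    posOrbit ϕ x ⊆ S := by
  rintro _ ⟨t, -, rfl⟩
  exact hS t hx

theorem IsInvariant.negOrbit_subset {S : Set M} (hS : IsInvariant ϕ S) {x : M} (hx : x ∈ S) :
    negOrbit ϕ x ⊆ S := by
  rintro _ ⟨t, -, rfl⟩
  exact hS t hx

theorem omegaSet_subset_of_posOrbit_subset {x : M} {C : Set M} (hC : IsClosed C)
    (h : posOrbit ϕ x ⊆ C) : omegaSet ϕ x ⊆ C := by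
  rw [omegaSet_eq_omegaLimit]
  refine (omegaLimit_subset_closure_image2 _ _ _ (Ici_mem_atTop 0)).trans (closure_minimal ?_ hC)
  rwa [← posOrbit_eq_image2]

theorem alphaSet_subset_of_negOrbit_subset {x : M} {C : Set M} (hC : IsClosed C)
    (h : negOrbit ϕ x ⊆ C) : alphaSet ϕ x ⊆ C := by
  rw [alphaSet_eq_omegaLimit]
  refine (omegaLimit_subset_closure_image2 _ _ _ (Iic_mem_atBot 0)).trans (closure_minimal ?_ hC)
  rwa [← negOrbit_eq_image2]

theorem omegaSet_nonempty_of_posOrbit_subset {x : M} {C : Set M} (hC : IsCompact C)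
    (h : posOrbit ϕ x ⊆ C) : (omegaSet ϕ x).Nonempty := by
  rw [omegaSet_eq_omegaLimit]
  refine nonempty_omegaLimit_of_isCompact_absorbing _ _ _ hC ⟨Ici 0, Ici_mem_atTop 0, ?_⟩
    (singleton_nonempty x)
  rw [← posOrbit_eq_image2]
  exact closure_minimal h hC.isClosed

theorem alphaSet_nonempty_of_negOrbit_subset {x : M} {C : Set M} (hC : IsCompact C)
    (h : negOrbit ϕ x ⊆ C) : (alphaSet ϕ x).Nonempty := by
  rw [alphaSet_eq_omegaLimit]
  refine nonempty_omegaLimit_of_isCompact_absorbing _ _ _ hC ⟨Iic 0, Iic_mem_atBot 0, ?_⟩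
    (singleton_nonempty x)
  rw [← negOrbit_eq_image2]
  exact closure_minimal h hC.isClosed

theorem Stable.disjoint_alphaSet {K : Set M} (hK : Stable ϕ K) {z : M} (hz : z ∉ K) :
    Disjoint (alphaSet ϕ z) K := by
  refine Set.disjoint_right.2 fun q hqK hqα => ?_
  obtain ⟨V, hV, hVz⟩ :=
    hK {z}ᶜ (isOpen_compl_singleton.mem_nhdsSet.2 (subset_compl_singleton_iff.2 hz))
  rw [alphaSet_eq_omegaLimit, mem_omegaLimit_singleton_iff_mapClusterPt] at hqα
  obtain ⟨t, htV, ht⟩ :=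
    ((hqα.frequently (mem_nhdsSet_iff_forall.1 hV q hqK)).and_eventually
      (eventually_le_atBot 0)).exists
  have hzV : z ∈ posOrbit ϕ (ϕ t z) :=
    ⟨-t, neg_nonneg.2 ht, by rw [← ϕ.map_add, neg_add_cancel, ϕ.map_zero_apply]⟩
  exact hVz (mem_biUnion htV hzV) rfl

theorem Stable.not_negOrbit_subset_of_subset_bplus {K N : Set M} (hK : Stable ϕ K)
    (hN : IsCompact N) (hNB : N ⊆ Bplus ϕ K) {z : M} (hz : z ∉ K) : ¬ negOrbit ϕ z ⊆ N := by
  intro hzN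
  obtain ⟨p, hp⟩ := alphaSet_nonempty_of_negOrbit_subset hN hzN
  obtain ⟨⟨q, hq⟩, hωK⟩ := hNB (alphaSet_subset_of_negOrbit_subset hN.isClosed hzN hp)
  have hωα : omegaSet ϕ p ⊆ alphaSet ϕ z := omegaSet_subset_of_posOrbit_subset
    (isClosed_alphaSet ϕ z) ((isInvariant_alphaSet ϕ z).posOrbit_subset hp)
  exact Set.disjoint_left.1 (hK.disjoint_alphaSet hz) (hωα hq) (hωK hq)

theorem stable_of_forall_not_negOrbit_subset {K W : Set M} (hK : IsForwardInvariant ϕ K)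
    (hWc : IsCompact W) (hW : W ∈ 𝓝ˢ K) (hesc : ∀ z ∈ W \ K, ¬ negOrbit ϕ z ⊆ W) :
    Stable ϕ K := by
  intro A hA
  obtain ⟨G, hGo, hKG, hGWA⟩ := mem_nhdsSet_iff_exists.1 (inter_mem hW hA)
  have hGW : G ⊆ W := hGWA.trans inter_subset_left
  obtain ⟨T, hT0, hT⟩ := (hWc.diff hGo).exists_uniform_backward_exit_time ϕ hWc.isClosed
    fun y hy => by
      obtain ⟨_, ⟨t, ht, rfl⟩, hty⟩ := not_subset.1 (hesc y ⟨hy.1, fun hyK => hy.2 (hKG hyK)⟩)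
      exact ⟨t, ht, hty⟩
  have hN : ∀ᶠ x in 𝓝ˢ K, ∀ t ∈ Icc 0 T, ϕ t x ∈ G := eventually_nhdsSet_iff_forall.2 fun k hk =>
    isCompact_Icc.eventually_forall_flow_mem ϕ hGo fun t ht => hKG (hK ht.1 hk)
  refine ⟨_, hN, iUnion₂_subset fun x hx => ?_⟩
  rintro _ ⟨t, ht, rfl⟩
  suffices ϕ t x ∈ G from (hGWA this).2
  by_contra htG
  have hγ : Continuous fun s => ϕ s x := ϕ.continuous continuous_id continuous_const
  obtain ⟨s, hs, hsG, hbefore⟩ := exists_first_exit hγ hGo ht htG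
  have hTs : T < s := lt_of_not_ge fun h => hsG (hx s ⟨hs.1, h⟩)
  have hsW : MapsTo (fun r => ϕ r x) (Icc 0 s) W := by
    rw [← closure_Ico (by linarith : (0 : ℝ) ≠ s)]
    exact closure_minimal (fun r hr => hGW (hbefore hr)) (hWc.isClosed.preimage hγ)
  obtain ⟨r, hr, hrW⟩ := hT (ϕ s x) ⟨hsW ⟨hs.1, le_rfl⟩, hsG⟩
  rw [← ϕ.map_add] at hrW
  exact hrW (hsW ⟨by linarith [hr.1], by linarith [hr.2]⟩)

theorem Stable.bplus_mem_nhdsSet {K W : Set M} (hK : Stable ϕ K) (hWc : IsCompact W)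
    (hW : W ∈ 𝓝ˢ K) (hesc : ∀ z ∈ W \ K, ¬ negOrbit ϕ z ⊆ W) : Bplus ϕ K ∈ 𝓝ˢ K := by
  obtain ⟨V, hV, hVW⟩ := hK W hW
  refine mem_of_superset hV fun x hx => ?_
  have hxW : posOrbit ϕ x ⊆ W := fun y hy => hVW (mem_biUnion hx hy)
  have hωW : omegaSet ϕ x ⊆ W := omegaSet_subset_of_posOrbit_subset hWc.isClosed hxW
  refine ⟨omegaSet_nonempty_of_posOrbit_subset hWc hxW, fun p hp => ?_⟩
  by_contra hpK
  exact hesc p ⟨hωW hp, hpK⟩ (((isInvariant_omegaSet ϕ x).negOrbit_subset hp).trans hωW)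

end LimitSets

theorem attractor_iff_no_trapped_negative_orbit_general
    {M : Type*} [MetricSpace M] [LocallyCompactSpace M]
    (ϕ : Flow ℝ M) (K : Set M)
    (hKc : IsCompact K) (hKinv : flowInv ϕ K) :
    IsAttractor ϕ K ↔ ∃ U ∈ 𝓝ˢ K, ∀ z ∈ U \ K, ¬ negOrbit ϕ z ⊆ U := by
  constructor
  · rintro ⟨hstab, hB⟩
    obtain ⟨N, ⟨hN, hNc⟩, hNB⟩ := hKc.nhdsSet_basis_isCompact.mem_iff.1 hB
    exact ⟨N, hN, fun z hz => hstab.not_negOrbit_subset_of_subset_bplus hNc hNB hz.2⟩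
  · rintro ⟨U, hU, hesc⟩
    obtain ⟨W, ⟨hW, hWc⟩, hWU⟩ := hKc.nhdsSet_basis_isCompact.mem_iff.1 hU
    have hescW : ∀ z ∈ W \ K, ¬ negOrbit ϕ z ⊆ W := fun z hz hzW =>
      hesc z ⟨hWU hz.1, hz.2⟩ (hzW.trans hWU)
    have hstab : Stable ϕ K :=
      stable_of_forall_not_negOrbit_subset hKinv.isInvariant.isForwardInvariant hWc hW hescW
    exact ⟨hstab, hstab.bplus_mem_nhdsSet hWc hW hescW⟩

theorem attractor_iff_no_trapped_negative_orbit
    {M : Type*} [MetricSpace M] [LocallyCompactSpace M]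
    (ϕ : Flow ℝ M) (K : Set M)
    (hKc : IsCompact K) (hKinv : flowInv ϕ K) (hproper : K ≠ Set.univ) :
    IsAttractor ϕ K ↔ ∃ U ∈ 𝓝ˢ K, ∀ z ∈ U \ K, ¬ negOrbit ϕ z ⊆ U :=
  attractor_iff_no_trapped_negative_orbit_general ϕ K hKc hKinv
end

section
/- Let M be a locally compact metric space with a continuous flow. If a sequence (Λₙ) of nonempty compact invariant subsets of M satisfies sup{dist(y, S) : y ∈ Λₙ} → 0 for a compact minimal set S, then Λₙ converges to S in the Hausdorff metric. -/
open Set Filter Metric Topology TopologicalSpace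

variable {M : Type*} [MetricSpace M]

/-! Points close enough to a compact minimal set `S` have orbits that are `ε`-dense in `S`, uniformly:
pick a finite `ε/2`-net of `S`; the points whose orbit meets every `ε/2`-ball around the net form an
open set, which contains `S` because every orbit in `S` is dense in `S`, hence contains a whole
thickening of `S`. A nonempty invariant set inside that thickening contains such an orbit, so it is
Hausdorff-close to `S`. -/

theorem flowInv_iff_isInvariant {ϕ : Flow ℝ M} {s : Set M} : flowInv ϕ s ↔ IsInvariant ϕ s :=
  (ϕ.isInvariant_iff_image_eq s).symm

theorem flowInv_closure_orbit (ϕ : Flow ℝ M) (x : M) : flowInv ϕ (closure (orbit ϕ x)) :=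
  flowInv_iff_isInvariant.2 fun t => (ϕ.isInvariant_orbit x t).closure (ϕ.continuous_toFun t)

theorem IsMinimalSet.closure_orbit_eq {ϕ : Flow ℝ M} {S : Set M} (hS : IsMinimalSet ϕ S)
    {y : M} (hy : y ∈ S) : closure (orbit ϕ y) = S := by
  obtain ⟨-, hSclosed, hSinv, hSmin⟩ := hS
  have horbit : orbit ϕ y ⊆ S := by
    rintro - ⟨t, rfl⟩
    exact hSinv t ▸ mem_image_of_mem (ϕ t) hy
  exact hSmin _ (hSclosed.closure_subset_iff.2 horbit)
    ⟨y, subset_closure ⟨0, ϕ.map_zero_apply y⟩⟩ isClosed_closure (flowInv_closure_orbit ϕ y)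

theorem IsMinimalSet.exists_thickening_orbit_dist_lt {ϕ : Flow ℝ M} {S : Set M}
    (hS : IsMinimalSet ϕ S) (hSc : IsCompact S) {ε : ℝ} (hε : 0 < ε) :
    ∃ δ > 0, ∀ y ∈ thickening δ S, ∀ x ∈ S, ∃ t, dist (ϕ t y) x < ε := by
  obtain ⟨N, hNS, hNfin, hSN⟩ :=
    finite_approx_of_totallyBounded hSc.totallyBounded (ε / 2) (half_pos hε)
  set U := ⋂ z ∈ N, ⋃ t, ϕ t ⁻¹' ball z (ε / 2)
  have hUopen : IsOpen U := hNfin.isOpen_biInter fun z _ =>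
    isOpen_iUnion fun t => isOpen_ball.preimage (ϕ.continuous_toFun t)
  have hSU : S ⊆ U := by
    intro y hy
    refine mem_iInter₂.2 fun z hz => mem_iUnion.2 ?_
    have hz : z ∈ closure (orbit ϕ y) := hS.closure_orbit_eq hy ▸ hNS hz
    obtain ⟨-, ⟨t, rfl⟩, hzt⟩ := mem_closure_iff.1 hz (ε / 2) (half_pos hε)
    exact ⟨t, mem_ball'.2 hzt⟩
  obtain ⟨δ, hδ, hδU⟩ := hSc.exists_thickening_subset_open hUopen hSU
  refine ⟨δ, hδ, fun y hy x hx => ?_⟩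
  obtain ⟨z, hzN, hxz⟩ := mem_iUnion₂.1 (hSN hx)
  obtain ⟨t, ht⟩ := mem_iUnion.1 (mem_iInter₂.1 (hδU hy) z hzN)
  refine ⟨t, ?_⟩
  calc dist (ϕ t y) x ≤ dist (ϕ t y) z + dist z x := dist_triangle _ _ _
    _ < ε / 2 + ε / 2 := add_lt_add ht (mem_ball'.1 hxz)
    _ = ε := add_halves ε

theorem IsMinimalSet.exists_thickening_hausdorffDist_le {ϕ : Flow ℝ M} {S : Set M}
    (hS : IsMinimalSet ϕ S) (hSc : IsCompact S) {ε : ℝ} (hε : 0 < ε) :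
    ∃ δ > 0, ∀ Λ : Set M, Λ.Nonempty → flowInv ϕ Λ → Λ ⊆ thickening δ S →
      hausdorffDist Λ S ≤ ε := by
  obtain ⟨δ, hδ, hdense⟩ := hS.exists_thickening_orbit_dist_lt hSc hε
  refine ⟨min δ ε, lt_min hδ hε, fun Λ ⟨y, hy⟩ hΛinv hΛS => ?_⟩
  refine hausdorffDist_le_of_mem_dist hε.le (fun z hz => ?_) (fun x hx => ?_)
  · obtain ⟨x, hx, hzx⟩ := mem_thickening_iff.1 (hΛS hz)
    exact ⟨x, hx, hzx.le.trans (min_le_right _ _)⟩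
  · obtain ⟨t, ht⟩ := hdense y (thickening_mono (min_le_left _ _) S (hΛS hy)) x hx
    exact ⟨ϕ t y, hΛinv t ▸ mem_image_of_mem (ϕ t) hy, (dist_comm x _ ▸ ht).le⟩

theorem approach_minimal_implies_hausdorff_convergence_general
    {M : Type*} [MetricSpace M]
    (ϕ : Flow ℝ M) (Λ : ℕ → Set M) (S : Set M)
    (hΛ : ∀ n, (Λ n).Nonempty ∧ IsCompact (Λ n) ∧ flowInv ϕ (Λ n))
    (hSc : IsCompact S) (hSmin : IsMinimalSet ϕ S)
    (happ : ∀ ε > (0 : ℝ), ∀ᶠ n in atTop, Λ n ⊆ Metric.thickening ε S) :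
    Tendsto (fun n => Metric.hausdorffDist (Λ n) S) atTop (𝓝 0) := by
  refine Metric.tendsto_nhds.2 fun ε hε => ?_
  obtain ⟨δ, hδ, hclose⟩ := hSmin.exists_thickening_hausdorffDist_le hSc (half_pos hε)
  filter_upwards [happ δ hδ] with n hn
  rw [Real.dist_0_eq_abs, abs_of_nonneg hausdorffDist_nonneg]
  exact (hclose (Λ n) (hΛ n).1 (hΛ n).2.2 hn).trans_lt (half_lt_self hε)

theorem approach_minimal_implies_hausdorff_convergence
    {M : Type*} [MetricSpace M] [LocallyCompactSpace M]
    (ϕ : Flow ℝ M) (Λ : ℕ → Set M) (S : Set M)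
    (hΛ : ∀ n, (Λ n).Nonempty ∧ IsCompact (Λ n) ∧ flowInv ϕ (Λ n))
    (hSc : IsCompact S) (hSmin : IsMinimalSet ϕ S)
    (happ : ∀ ε > (0 : ℝ), ∀ᶠ n in atTop, Λ n ⊆ Metric.thickening ε S) :
    Tendsto (fun n => Metric.hausdorffDist (Λ n) S) atTop (𝓝 0) :=
  approach_minimal_implies_hausdorff_convergence_general ϕ Λ S hΛ hSc hSmin happ
end

section
/- Let M be a locally compact metric space with a continuous flow, and Q a compact minimal set. Then for every ε > 0 there exists δ > 0 such that every nonempty compact invariant set contained in the open ball B(Q, δ) lies within Hausdorff distance ε of Q. -/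
open Set Filter Metric Topology TopologicalSpace

variable {M : Type*} [MetricSpace M]

/-!
Every orbit in a compact minimal set `Q` is dense in `Q`, so from finitely many times of the orbit
of `x ∈ Q` one already sees all of `Q` up to `ε / 2`; by continuity of the flow at those times the
same holds up to `ε` for every `y` near `x`. By compactness this gives `δ > 0` such that every orbit
starting in the `δ`-thickening of `Q` comes `ε`-close to every point of `Q`. An invariant set in that
thickening contains such an orbit, hence is `ε`-dense in `Q`, while it lies within `δ ≤ ε` of `Q`.
-/

section

variable (ϕ : Flow ℝ M)

lemma orbit_subset_of_flowInv {s : Set M} (hs : flowInv ϕ s) {x : M} (hx : x ∈ s) :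
    orbit ϕ x ⊆ s := by
  rintro _ ⟨t, rfl⟩
  rw [← hs t]
  exact mem_image_of_mem _ hx

lemma flowInv_orbit (x : M) : flowInv ϕ (orbit ϕ x) := by
  intro t
  ext y
  constructor
  · rintro ⟨_, ⟨s, rfl⟩, rfl⟩
    exact ⟨t + s, ϕ.map_add t s x⟩
  · rintro ⟨s, rfl⟩
    refine ⟨ϕ (s - t) x, ⟨s - t, rfl⟩, ?_⟩
    rw [← ϕ.map_add, add_sub_cancel]

lemma flowInv_closure {s : Set M} (hs : flowInv ϕ s) : flowInv ϕ (closure s) := by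
  intro t
  rw [show ϕ t '' closure s = ϕ.toHomeomorph t '' closure s from rfl,
    (ϕ.toHomeomorph t).image_closure]
  exact congrArg closure (hs t)

lemma IsMinimalSet.closure_orbit_eq_s4 {Q : Set M} (hQ : IsMinimalSet ϕ Q) {x : M} (hx : x ∈ Q) :
    closure (orbit ϕ x) = Q := by
  obtain ⟨-, hQclosed, hQinv, hQmin⟩ := hQ
  refine hQmin _ ?_ ⟨x, subset_closure ⟨0, ϕ.map_zero_apply x⟩⟩ isClosed_closure
    (flowInv_closure ϕ (flowInv_orbit ϕ x))
  exact hQclosed.closure_subset_iff.2 (orbit_subset_of_flowInv ϕ hQinv hx)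

lemma eventually_subset_thickening_orbit {K : Set M} (hK : IsCompact K) {x : M}
    (hKx : K ⊆ closure (orbit ϕ x)) {ε : ℝ} (hε : 0 < ε) :
    ∀ᶠ y in 𝓝 x, K ⊆ thickening ε (orbit ϕ y) := by
  have hcover : K ⊆ ⋃ t : ℝ, ball (ϕ t x) (ε / 2) := by
    simpa only [thickening_eq_biUnion_ball, orbit, biUnion_range] using
      hKx.trans (closure_subset_thickening (half_pos hε) _)
  obtain ⟨T, hT⟩ := hK.elim_finite_subcover _ (fun _ => isOpen_ball) hcover
  have hnear : ∀ᶠ y in 𝓝 x, ∀ t ∈ T, dist (ϕ t y) (ϕ t x) < ε / 2 :=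
    (eventually_all_finset T).2 fun t _ =>
      Metric.tendsto_nhds.1 ((ϕ.continuous continuous_const continuous_id).tendsto x) _
        (half_pos hε)
  filter_upwards [hnear] with y hy q hq
  obtain ⟨t, htT, hqt⟩ := mem_iUnion₂.1 (hT hq)
  refine mem_thickening_iff.2 ⟨ϕ t y, ⟨t, rfl⟩, ?_⟩
  calc dist q (ϕ t y) ≤ dist q (ϕ t x) + dist (ϕ t y) (ϕ t x) := dist_triangle_right _ _ _
    _ < ε / 2 + ε / 2 := add_lt_add (mem_ball.1 hqt) (hy t htT)
    _ = ε := add_halves ε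

lemma IsMinimalSet.exists_pos_subset_thickening_orbit {Q : Set M} (hQc : IsCompact Q)
    (hQ : IsMinimalSet ϕ Q) {ε : ℝ} (hε : 0 < ε) :
    ∃ δ > 0, ∀ y ∈ thickening δ Q, Q ⊆ thickening ε (orbit ϕ y) := by
  have hnhds : {y | Q ⊆ thickening ε (orbit ϕ y)} ∈ 𝓝ˢ Q :=
    mem_nhdsSet_iff_forall.2 fun x hx =>
      eventually_subset_thickening_orbit ϕ hQc (hQ.closure_orbit_eq_s4 ϕ hx).ge hε
  exact (hasBasis_nhdsSet_thickening hQc).mem_iff.1 hnhds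

end

lemma hausdorffDist_le_of_subset_thickening {X : Type*} [PseudoMetricSpace X] {s t : Set X}
    {r : ℝ} (hr : 0 ≤ r) (hst : s ⊆ thickening r t) (hts : t ⊆ thickening r s) :
    hausdorffDist s t ≤ r := by
  refine hausdorffDist_le_of_mem_dist hr (fun x hx => ?_) (fun x hx => ?_)
  · obtain ⟨y, hy, hxy⟩ := mem_thickening_iff.1 (hst hx)
    exact ⟨y, hy, hxy.le⟩
  · obtain ⟨y, hy, hxy⟩ := mem_thickening_iff.1 (hts hx)
    exact ⟨y, hy, hxy.le⟩

theorem minimal_set_hausdorff_control_general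
    {M : Type*} [MetricSpace M]
    (ϕ : Flow ℝ M) (Q : Set M) (hQc : IsCompact Q) (hQmin : IsMinimalSet ϕ Q) :
    ∀ ε > (0 : ℝ), ∃ δ > (0 : ℝ), ∀ Λ : Set M,
      Λ.Nonempty → IsCompact Λ → flowInv ϕ Λ → Λ ⊆ Metric.thickening δ Q →
        Metric.hausdorffDist Λ Q ≤ ε := by
  intro ε hε
  obtain ⟨δ, hδ, hδQ⟩ := hQmin.exists_pos_subset_thickening_orbit ϕ hQc hε
  refine ⟨min δ ε, lt_min hδ hε, fun Λ ⟨y, hy⟩ _ hΛinv hΛQ => ?_⟩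
  refine hausdorffDist_le_of_subset_thickening hε.le
    (hΛQ.trans (thickening_mono (min_le_right _ _) Q)) ?_
  calc Q ⊆ thickening ε (orbit ϕ y) :=
        hδQ y (thickening_mono (min_le_left _ _) Q (hΛQ hy))
    _ ⊆ thickening ε Λ := thickening_subset_of_subset ε (orbit_subset_of_flowInv ϕ hΛinv hy)

theorem minimal_set_hausdorff_control
    {M : Type*} [MetricSpace M] [LocallyCompactSpace M]
    (ϕ : Flow ℝ M) (Q : Set M) (hQc : IsCompact Q) (hQmin : IsMinimalSet ϕ Q) :
    ∀ ε > (0 : ℝ), ∃ δ > (0 : ℝ), ∀ Λ : Set M,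
      Λ.Nonempty → IsCompact Λ → flowInv ϕ Λ → Λ ⊆ Metric.thickening δ Q →
        Metric.hausdorffDist Λ Q ≤ ε :=
  minimal_set_hausdorff_control_general ϕ Q hQc hQmin
end

section
/- Let M be a metric space with a continuous flow, and (xₙ) a sequence of periodic points with minimal periods λₙ. If xₙ → x and (λₙ) converges in [0, ∞), then x is either a periodic point or an equilibrium of the flow. -/
open Set Filter Metric Topology TopologicalSpace

variable {M : Type*} [MetricSpace M]

/-! The periods of `x` form a closed subgroup of `ℝ`, and by continuity of the flow a limit of
periods of the `xₙ` is a period of `x`. If `λₙ → T ≠ 0`, then `T` is a nonzero period, so this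
subgroup is either all of `ℝ` or cyclic with a positive generator. If `λₙ → 0`, every `t` is the
limit of the periods `⌊t / λₙ⌋ λₙ` of the `xₙ`. -/

namespace AddSubgroup

variable {G : Type*} [AddCommGroup G] [LinearOrder G] [IsOrderedAddMonoid G]
  [TopologicalSpace G] [OrderTopology G] [Archimedean G]

theorem eq_top_or_exists_pos_eq_zmultiples_of_isClosed {S : AddSubgroup G}
    (hS : IsClosed (S : Set G)) (hbot : S ≠ ⊥) : S = ⊤ ∨ ∃ p > 0, S = zmultiples p := by
  refine S.dense_or_cyclic.imp (fun hd => ?_) fun ⟨a, ha⟩ => ?_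
  · exact SetLike.coe_injective (hS.closure_eq ▸ hd.closure_eq)
  · rw [← zmultiples_eq_closure] at ha
    refine ⟨|a|, abs_pos.2 ?_, ha.trans (zmultiples_abs a).symm⟩
    rintro rfl
    exact hbot (ha.trans zmultiples_zero_eq_bot)

end AddSubgroup

theorem Int.tendsto_floor_div_mul {k ι : Type*} [Field k] [LinearOrder k] [IsStrictOrderedRing k]
    [FloorRing k] [TopologicalSpace k] [OrderTopology k] {l : Filter ι} {u : ι → k}
    (hpos : ∀ i, 0 < u i) (hu : Tendsto u l (𝓝 0)) (a : k) :
    Tendsto (fun i => ⌊a / u i⌋ * u i) l (𝓝 a) := by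
  have hlow : Tendsto (fun i => a - u i) l (𝓝 a) := by simpa using tendsto_const_nhds.sub hu
  refine tendsto_of_tendsto_of_tendsto_of_le_of_le hlow tendsto_const_nhds (fun i => ?_)
    fun i => sub_nonneg.1 (Int.sub_floor_div_mul_nonneg a (hpos i))
  have := Int.sub_floor_div_mul_lt a (hpos i)
  linarith

namespace Flow

variable {τ α : Type*} [TopologicalSpace τ] [AddGroup τ] [TopologicalSpace α]
  (ϕ : Flow τ α) (x : α)

def periodSubgroup : AddSubgroup τ where
  carrier := {t | ϕ t x = x}
  zero_mem' := ϕ.map_zero_apply x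
  add_mem' {a b} ha hb := by
    change ϕ (a + b) x = x
    rw [ϕ.map_add, hb, ha]
  neg_mem' {a} ha := by
    calc ϕ (-a) x = ϕ (-a) (ϕ a x) := by rw [ha]
      _ = x := by rw [← ϕ.map_add, neg_add_cancel, ϕ.map_zero_apply]

variable {ϕ x}

@[simp]
theorem mem_periodSubgroup {t : τ} : t ∈ ϕ.periodSubgroup x ↔ ϕ t x = x := Iff.rfl

theorem isClosed_periodSubgroup [T1Space α] : IsClosed (ϕ.periodSubgroup x : Set τ) :=
  isClosed_singleton.preimage (ϕ.continuous continuous_id continuous_const)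

theorem mem_periodSubgroup_of_tendsto [T2Space α] {ι : Type*} {l : Filter ι} [l.NeBot]
    {ts : ι → τ} {xs : ι → α} {t : τ} (hper : ∀ i, ϕ (ts i) (xs i) = xs i)
    (ht : Tendsto ts l (𝓝 t)) (hx : Tendsto xs l (𝓝 x)) : t ∈ ϕ.periodSubgroup x := by
  have hlim : Tendsto (fun i => ϕ (ts i) (xs i)) l (𝓝 (ϕ t x)) :=
    ((ϕ.continuous continuous_fst continuous_snd).tendsto (t, x)).comp (ht.prodMk_nhds hx)
  simp only [hper] at hlim
  exact tendsto_nhds_unique hlim hx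

end Flow

section

variable {ϕ : Flow ℝ M} {x : M} {p : ℝ}

theorem minPeriod_iff_periodSubgroup_eq_zmultiples :
    MinPeriod ϕ x p ↔ 0 < p ∧ ϕ.periodSubgroup x = .zmultiples p := by
  refine and_congr_right fun _ => ?_
  simp only [Set.ext_iff, SetLike.ext_iff, Set.mem_ofPred_eq, Flow.mem_periodSubgroup,
    AddSubgroup.mem_zmultiples_iff, zsmul_eq_mul, eq_comm (b := _ * p)]

theorem MinPeriod.apply_intCast_mul (h : MinPeriod ϕ x p) (k : ℤ) : ϕ (k * p) x = x :=
  show (k : ℝ) * p ∈ {t : ℝ | ϕ t x = x} from h.2 ▸ ⟨k, rfl⟩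

theorem minPeriod_or_isEquilibrium_of_apply_eq_self {t : ℝ} (ht : t ≠ 0) (hper : ϕ t x = x) :
    (∃ p, MinPeriod ϕ x p) ∨ IsEquilibrium ϕ x := by
  have hbot : ϕ.periodSubgroup x ≠ ⊥ := fun h => ht <| by
    simpa [h] using (Flow.mem_periodSubgroup.2 hper : t ∈ ϕ.periodSubgroup x)
  rcases AddSubgroup.eq_top_or_exists_pos_eq_zmultiples_of_isClosed
    Flow.isClosed_periodSubgroup hbot with htop | ⟨p, hp, hS⟩
  · exact .inr fun s => Flow.mem_periodSubgroup.1 (htop ▸ AddSubgroup.mem_top s)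
  · exact .inl ⟨p, minPeriod_iff_periodSubgroup_eq_zmultiples.2 ⟨hp, hS⟩⟩

theorem isEquilibrium_of_tendsto_minPeriod_zero {ι : Type*} {l : Filter ι} [l.NeBot]
    {xs : ι → M} {lam : ι → ℝ} (hper : ∀ i, MinPeriod ϕ (xs i) (lam i))
    (hx : Tendsto xs l (𝓝 x)) (hlam : Tendsto lam l (𝓝 0)) : IsEquilibrium ϕ x := fun t =>
  Flow.mem_periodSubgroup_of_tendsto (fun i => (hper i).apply_intCast_mul _)
    (Int.tendsto_floor_div_mul (fun i => (hper i).1) hlam t) hx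

end

theorem limit_of_periodic_points_general
    {M : Type*} [MetricSpace M]
    (ϕ : Flow ℝ M) (x : M) (xs : ℕ → M) (lam : ℕ → ℝ)
    (hper : ∀ n, MinPeriod ϕ (xs n) (lam n))
    (hx : Tendsto xs atTop (𝓝 x))
    (T : ℝ) (hlam : Tendsto lam atTop (𝓝 T)) :
    (∃ p : ℝ, MinPeriod ϕ x p) ∨ IsEquilibrium ϕ x := by
  have hT : ϕ T x = x :=
    Flow.mem_periodSubgroup_of_tendsto (fun n => by simpa using (hper n).apply_intCast_mul 1)
      hlam hx
  rcases eq_or_ne T 0 with rfl | hT0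
  · exact .inr (isEquilibrium_of_tendsto_minPeriod_zero hper hx hlam)
  · exact minPeriod_or_isEquilibrium_of_apply_eq_self hT0 hT

theorem limit_of_periodic_points
    {M : Type*} [MetricSpace M]
    (ϕ : Flow ℝ M) (x : M) (xs : ℕ → M) (lam : ℕ → ℝ)
    (hper : ∀ n, MinPeriod ϕ (xs n) (lam n))
    (hx : Tendsto xs atTop (𝓝 x))
    (T : ℝ) (hT : 0 ≤ T) (hlam : Tendsto lam atTop (𝓝 T)) :
    (∃ p : ℝ, MinPeriod ϕ x p) ∨ IsEquilibrium ϕ x :=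
  limit_of_periodic_points_general ϕ x xs lam hper hx T hlam
end

section
/- Every locally compact, connected metric space is separable, and hence has cardinality at most the continuum. -/
open Set Filter Metric Topology TopologicalSpace

variable {M : Type*} [MetricSpace M]

section SeparableRadius

variable {X : Type*} [PseudoMetricSpace X]

/-- The cap at `1` keeps the set bounded above, so that `sSup` is not its junk value `0`. -/
noncomputable def separableRadius (x : X) : ℝ :=
  sSup {r : ℝ | r ≤ 1 ∧ IsSeparable (ball x r)}

lemma le_separableRadius {x : X} {r : ℝ} (hr₁ : r ≤ 1) (hr : IsSeparable (ball x r)) :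
    r ≤ separableRadius x :=
  le_csSup ⟨1, fun _ hs => hs.1⟩ ⟨hr₁, hr⟩

lemma separableRadius_set_nonempty (x : X) :
    {r : ℝ | r ≤ 1 ∧ IsSeparable (ball x r)}.Nonempty :=
  ⟨0, zero_le_one, by simpa using countable_empty.isSeparable⟩

lemma separableRadius_nonneg (x : X) : 0 ≤ separableRadius x :=
  le_separableRadius zero_le_one (by simpa using countable_empty.isSeparable)

lemma isSeparable_ball_of_lt_separableRadius {x : X} {r : ℝ} (hr : r < separableRadius x) :
    IsSeparable (ball x r) := by
  obtain ⟨r', ⟨-, hr'⟩, hrr'⟩ := exists_lt_of_lt_csSup (separableRadius_set_nonempty x) hr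
  exact hr'.mono (ball_subset_ball hrr'.le)

lemma isSeparable_ball_mul_separableRadius (x : X) {a : ℝ} (ha : a < 1) :
    IsSeparable (ball x (a * separableRadius x)) := by
  rcases (separableRadius_nonneg x).eq_or_lt with h | h
  · simpa [← h] using countable_empty.isSeparable
  · exact isSeparable_ball_of_lt_separableRadius (mul_lt_of_lt_one_left h ha)

lemma separableRadius_le_add_dist (x y : X) :
    separableRadius x ≤ separableRadius y + dist x y := by
  refine csSup_le (separableRadius_set_nonempty x) fun r ⟨hr₁, hr⟩ => ?_
  have : r - dist x y ≤ separableRadius y :=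
    le_separableRadius (by linarith [dist_nonneg (x := x) (y := y)])
      (hr.mono (ball_subset_ball' (by rw [dist_comm]; linarith)))
  linarith

lemma separableRadius_pos {x : X} (h : ∃ s ∈ 𝓝 x, IsSeparable s) :
    0 < separableRadius x := by
  obtain ⟨s, hs, hsep⟩ := h
  obtain ⟨ε, hε, hεs⟩ := Metric.mem_nhds_iff.1 hs
  exact (lt_min hε one_pos).trans_le <| le_separableRadius (min_le_right _ _) <|
    hsep.mono <| (ball_subset_ball (min_le_left _ _)).trans hεs

end SeparableRadius

section SeparableThickening

variable {X : Type*} [PseudoMetricSpace X]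

noncomputable def separableThickening (s : Set X) : Set X :=
  ⋃ x ∈ s, ball x (separableRadius x / 2)

lemma isOpen_separableThickening (s : Set X) : IsOpen (separableThickening s) :=
  isOpen_biUnion fun _ _ => isOpen_ball

lemma mem_separableThickening_of_dist_lt {s : Set X} {x y : X} (hx : x ∈ s)
    (hxy : dist y x < separableRadius y / 3) : y ∈ separableThickening s :=
  mem_biUnion hx <| mem_ball.2 <| by linarith [separableRadius_le_add_dist y x]

/-- Each ball of the thickening lies in a ball of radius `3/4 · separableRadius` around a point
of a countable set that is dense in `s`. -/
lemma isSeparable_separableThickening {s : Set X} (hs : IsSeparable s) :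
    IsSeparable (separableThickening s) := by
  obtain ⟨c, hc, hsc⟩ := hs
  have : Countable c := hc.to_subtype
  refine (IsSeparable.iUnion fun z : c =>
    isSeparable_ball_mul_separableRadius (z : X) (a := 3 / 4) (by norm_num)).mono ?_
  refine iUnion₂_subset fun x hx y hy => ?_
  have hρx : 0 < separableRadius x := by linarith [mem_ball.1 hy, dist_nonneg (x := y) (y := x)]
  obtain ⟨z, hz, hxz⟩ :=
    Metric.mem_closure_iff.1 (hsc hx) (separableRadius x / 8) (by positivity)
  refine mem_iUnion.2 ⟨⟨z, hz⟩, mem_ball.2 ?_⟩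
  linarith [mem_ball.1 hy, dist_triangle y x z, separableRadius_le_add_dist x z]

lemma isSeparable_iterate_separableThickening {s : Set X} (hs : IsSeparable s) (n : ℕ) :
    IsSeparable (separableThickening^[n] s) := by
  induction n with
  | zero => exact hs
  | succ n ih => rw [Function.iterate_succ_apply']; exact isSeparable_separableThickening ih

end SeparableThickening

/-- The points reachable from `x₀` by finitely many thickening steps form a separable set, which
is open and, because `separableRadius` is `1`-Lipschitz, also closed. -/
theorem separableSpace_of_forall_exists_isSeparable_mem_nhds {X : Type*} [PseudoMetricSpace X]
    [PreconnectedSpace X] (h : ∀ x : X, ∃ s ∈ 𝓝 x, IsSeparable s) : SeparableSpace X := by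
  rcases isEmpty_or_nonempty X with _ | ⟨⟨x₀⟩⟩
  · infer_instance
  have hρ (x : X) : 0 < separableRadius x := separableRadius_pos (h x)
  set S := ⋃ n : ℕ, separableThickening^[n + 1] {x₀}
  have hS_sep : IsSeparable S := IsSeparable.iUnion fun n =>
    isSeparable_iterate_separableThickening (countable_singleton x₀).isSeparable (n + 1)
  have hS_open : IsOpen S := isOpen_iUnion fun n => by
    rw [Function.iterate_succ_apply']
    exact isOpen_separableThickening _
  have hS_closed : IsClosed S := closure_subset_iff_isClosed.1 fun y hy => by
    obtain ⟨x, hxS, hxy⟩ := Metric.mem_closure_iff.1 hy _ (div_pos (hρ y) three_pos)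
    obtain ⟨n, hn⟩ := mem_iUnion.1 hxS
    refine mem_iUnion.2 ⟨n + 1, ?_⟩
    rw [Function.iterate_succ_apply' _ (n + 1)]
    exact mem_separableThickening_of_dist_lt hn hxy
  have hx₀ : x₀ ∈ S := mem_iUnion.2 ⟨0, mem_separableThickening_of_dist_lt rfl
    (by simpa using div_pos (hρ x₀) three_pos)⟩
  rw [← isSeparable_univ_iff, ← IsClopen.eq_univ ⟨hS_closed, hS_open⟩ ⟨x₀, hx₀⟩]
  exact hS_sep

/-- Every point is the limit of a sequence in a fixed countable dense set, and limits are
unique, so `X` injects into the sequences of that set. -/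
theorem mk_le_continuum_of_separableSpace (X : Type*) [TopologicalSpace X] [T2Space X]
    [FirstCountableTopology X] [SeparableSpace X] : Cardinal.mk X ≤ Cardinal.continuum := by
  obtain ⟨D, hD_count, hD_dense⟩ := exists_countable_dense X
  choose u hu hu_lim using fun x : X =>
    mem_closure_iff_seq_limit.1 (hD_dense.closure_eq ▸ mem_univ x)
  have hinj : Function.Injective fun x n => (⟨u x n, hu x n⟩ : D) := fun x y hxy => by
    have hu_eq : u x = u y := funext fun n => congrArg Subtype.val (congrFun hxy n)
    exact tendsto_nhds_unique (hu_lim x) (hu_eq ▸ hu_lim y)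
  calc Cardinal.mk X ≤ Cardinal.mk (ℕ → D) := Cardinal.mk_le_of_injective hinj
    _ = Cardinal.lift (Cardinal.mk D) ^ Cardinal.lift (Cardinal.mk ℕ) := Cardinal.mk_arrow ℕ D
    _ ≤ Cardinal.aleph0 ^ Cardinal.aleph0 := by
      rw [Cardinal.mk_nat, Cardinal.lift_aleph0]
      exact Cardinal.power_le_power_right
        (Cardinal.lift_le_aleph0.2 (Cardinal.mk_le_aleph0_iff.2 hD_count.to_subtype))
    _ = Cardinal.continuum := Cardinal.aleph0_power_aleph0

theorem locallyCompact_connected_separable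
    (M : Type*) [MetricSpace M] [LocallyCompactSpace M] [ConnectedSpace M] :
    SeparableSpace M ∧ Cardinal.mk M ≤ Cardinal.continuum := by
  have : SeparableSpace M := separableSpace_of_forall_exists_isSeparable_mem_nhds fun x =>
    let ⟨K, hK, hKx⟩ := exists_compact_mem_nhds x
    ⟨K, hKx, hK.isSeparable⟩
  exact ⟨this, mk_le_continuum_of_separableSpace M⟩
end

section
/- Let M be a locally compact metric space with a continuous flow, and A ⊆ M an open set such that the family CMin(A) of compact minimal sets contained in A is nonempty and dense in itself in the Hausdorff metric. Then for every Λ₀ ∈ CMin(A) and every ε₀ > 0 with the closed ball B[Λ₀, ε₀] compact and contained in A, there exists a continuum (a family of cardinality 2^ℵ₀) of pairwise disjoint compact minimal sets contained in B(Λ₀, ε₀). -/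
open Set Filter Metric Topology TopologicalSpace

variable {M : Type*} [MetricSpace M]

/-- The set of compact minimal sets of the flow contained in `A`. -/
def CMinIn (ϕ : Flow ℝ M) (A : Set M) : Set (Set M) :=
  {Λ | IsCompact Λ ∧ IsMinimalSet ϕ Λ ∧ Λ ⊆ A}

/-! Distinct minimal sets are disjoint, so a minimal set `Λ'` Hausdorff-close to `Λ` sits inside
a small closed tube around `Λ`, and thin enough tubes around `Λ` and `Λ'` are disjoint. Iterating
this split yields a binary tree of nested compact tubes in which the two children of a node are
disjoint. The tubes along a branch `a : ℕ → Bool` decrease to a compact set whose largest invariant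
subset is nonempty (Cantor's intersection theorem, applied to the invariant parts of the tubes,
each of which contains a minimal set), hence contains a minimal set by Zorn's lemma. Distinct
branches separate at some depth, so they produce disjoint minimal sets: `2 ^ ℵ₀` of them. -/

section MinimalSets

variable (ϕ : Flow ℝ M)

theorem IsMinimalSet.disjoint_of_ne {s t : Set M} (hs : IsMinimalSet ϕ s)
    (ht : IsMinimalSet ϕ t) (hst : s ≠ t) : Disjoint s t := by
  by_contra h
  rw [not_disjoint_iff_nonempty_inter] at h
  have hinv : flowInv ϕ (s ∩ t) := fun u => by
    rw [image_inter (f := ϕ u) (ϕ.toHomeomorph u).injective, hs.2.2.1 u, ht.2.2.1 u]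
  have hcl := hs.2.1.inter ht.2.1
  exact hst <| (hs.2.2.2 _ inter_subset_left h hcl hinv).symm.trans
    (ht.2.2.2 _ inter_subset_right h hcl hinv)

theorem IsCompact.exists_isMinimalSet_subset {K : Set M} (hK : IsCompact K) (hne : K.Nonempty)
    (hinv : flowInv ϕ K) : ∃ m ⊆ K, IsMinimalSet ϕ m := by
  let S := {s : Set M | s ⊆ K ∧ s.Nonempty ∧ IsClosed s ∧ flowInv ϕ s}
  have hchain : ∀ c ⊆ S, IsChain (· ⊆ ·) c → c.Nonempty → ∃ lb ∈ S, ∀ s ∈ c, lb ⊆ s := by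
    intro c hcS hc ⟨s₀, hs₀⟩
    have : Nonempty c := ⟨⟨s₀, hs₀⟩⟩
    refine ⟨⋂₀ c, ⟨(sInter_subset_of_mem hs₀).trans (hcS hs₀).1, ?_, ?_, fun u => ?_⟩,
      fun s hs => sInter_subset_of_mem hs⟩
    · exact IsCompact.nonempty_sInter_of_directed_nonempty_isCompact_isClosed
        (fun s hs u hu => (hc.total hs hu).elim (fun h => ⟨s, hs, subset_rfl, h⟩)
          fun h => ⟨u, hu, h, subset_rfl⟩) (fun s hs => (hcS hs).2.1)
        (fun s hs => hK.of_isClosed_subset (hcS hs).2.2.1 (hcS hs).1) (fun s hs => (hcS hs).2.2.1)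
    · exact isClosed_sInter fun s hs => (hcS hs).2.2.1
    · rw [sInter_eq_iInter, image_iInter (f := ϕ u) (ϕ.toHomeomorph u).bijective]
      exact iInter_congr fun s => (hcS s.2).2.2.2 u
  obtain ⟨m, -, hmS, hmin⟩ := zorn_superset_nonempty S hchain K ⟨subset_rfl, hne, hK.isClosed, hinv⟩
  refine ⟨m, hmS.1, hmS.2.1, hmS.2.2.1, hmS.2.2.2, fun u hu hune hucl huinv => ?_⟩
  exact Subset.antisymm hu (hmin ⟨hu.trans hmS.1, hune, hucl, huinv⟩ hu)

def invariantPart (K : Set M) : Set M := {x | ∀ t, ϕ t x ∈ K}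

theorem invariantPart_subset (K : Set M) : invariantPart ϕ K ⊆ K := fun x hx => by
  simpa only [ϕ.map_zero_apply] using hx 0

theorem flowInv_invariantPart (K : Set M) : flowInv ϕ (invariantPart ϕ K) := by
  refine (ϕ.isInvariant_iff_image_eq _).1 fun s x hx t => ?_
  simpa only [← ϕ.map_add] using hx (t + s)

theorem subset_invariantPart {s K : Set M} (hsK : s ⊆ K) (hs : flowInv ϕ s) :
    s ⊆ invariantPart ϕ K := fun _ hx t => hsK (hs t ▸ mem_image_of_mem _ hx)

theorem IsClosed.invariantPart {K : Set M} (hK : IsClosed K) : IsClosed (invariantPart ϕ K) := by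
  rw [_root_.invariantPart, ofPred_forall]
  exact isClosed_iInter fun t => hK.preimage (ϕ.continuous_toFun t)

theorem invariantPart_iInter {ι : Sort*} (K : ι → Set M) :
    invariantPart ϕ (⋂ i, K i) = ⋂ i, invariantPart ϕ (K i) := by
  ext x
  simp only [invariantPart, mem_iInter, mem_ofPred_eq]
  exact forall_comm

theorem exists_isMinimalSet_subset_iInter {D : ℕ → Set M} (hD : Antitone D)
    (hc : ∀ n, IsCompact (D n)) (hinv : ∀ n, ∃ s ⊆ D n, s.Nonempty ∧ flowInv ϕ s) :
    ∃ m ⊆ ⋂ n, D n, IsMinimalSet ϕ m := by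
  have hI : (invariantPart ϕ (⋂ n, D n)).Nonempty := by
    rw [invariantPart_iInter]
    refine IsCompact.nonempty_iInter_of_sequence_nonempty_isCompact_isClosed _
      (fun n x hx t => hD n.le_succ (hx t)) (fun n => ?_)
      ((hc 0).of_isClosed_subset ((hc 0).isClosed.invariantPart ϕ) (invariantPart_subset ϕ _))
      (fun n => (hc n).isClosed.invariantPart ϕ)
    obtain ⟨s, hsD, hs, hsinv⟩ := hinv n
    exact hs.mono (subset_invariantPart ϕ hsD hsinv)
  have hIc : IsCompact (invariantPart ϕ (⋂ n, D n)) :=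
    (hc 0).of_isClosed_subset ((isClosed_iInter fun n => (hc n).isClosed).invariantPart ϕ)
      ((invariantPart_subset ϕ _).trans (iInter_subset _ 0))
  obtain ⟨m, hm, hmin⟩ := hIc.exists_isMinimalSet_subset ϕ hI (flowInv_invariantPart ϕ _)
  exact ⟨m, hm.trans (invariantPart_subset ϕ _), hmin⟩

end MinimalSets

theorem exists_mem_disjoint_cthickening {𝓕 : Set (Set M)} (hdisj : 𝓕.Pairwise Disjoint)
    (hcpt : ∀ Λ ∈ 𝓕, IsCompact Λ ∧ Λ.Nonempty)
    (hdense : ∀ Λ ∈ 𝓕, ∀ ε > (0 : ℝ), ∃ Λ' ∈ 𝓕, Λ' ≠ Λ ∧ hausdorffDist Λ' Λ < ε)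
    {Λ : Set M} (hΛ : Λ ∈ 𝓕) {r : ℝ} (hr : 0 < r) :
    ∃ Λ' ∈ 𝓕, ∃ δ > 0, δ ≤ r ∧ cthickening δ Λ' ⊆ cthickening r Λ ∧
      Disjoint (cthickening δ Λ) (cthickening δ Λ') := by
  obtain ⟨Λ', hΛ', hne, hd⟩ := hdense Λ hΛ (r / 2) (half_pos hr)
  obtain ⟨δ, hδ, hδdisj⟩ :=
    (hdisj hΛ hΛ' hne.symm).exists_cthickenings (hcpt Λ hΛ).1 (hcpt Λ' hΛ').1.isClosed
  have hΛ'Λ : Λ' ⊆ cthickening (r / 2) Λ := fun x hx => by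
    obtain ⟨y, hy, hxy⟩ := exists_dist_lt_of_hausdorffDist_lt hx hd <|
      hausdorffEDist_ne_top_of_nonempty_of_bounded (hcpt Λ' hΛ').2 (hcpt Λ hΛ).2
        (hcpt Λ' hΛ').1.isBounded (hcpt Λ hΛ).1.isBounded
    exact thickening_subset_cthickening _ _ (mem_thickening_iff.2 ⟨y, hy, hxy⟩)
  set δ' := min δ (r / 2)
  have hδ' : 0 < δ' := lt_min hδ (half_pos hr)
  refine ⟨Λ', hΛ', δ', hδ', (min_le_right _ _).trans (half_le_self hr.le), ?_,
    hδdisj.mono (cthickening_mono (min_le_left _ _) _) (cthickening_mono (min_le_left _ _) _)⟩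
  calc cthickening δ' Λ' ⊆ cthickening δ' (cthickening (r / 2) Λ) :=
        cthickening_subset_of_subset _ hΛ'Λ
    _ ⊆ cthickening (δ' + r / 2) Λ := cthickening_cthickening_subset hδ'.le (half_pos hr).le _
    _ ⊆ cthickening r Λ := cthickening_mono (by linarith [min_le_right δ (r / 2)]) _

theorem exists_cthickening_child {𝓕 : Set (Set M)} (hdisj : 𝓕.Pairwise Disjoint)
    (hcpt : ∀ Λ ∈ 𝓕, IsCompact Λ ∧ Λ.Nonempty)
    (hdense : ∀ Λ ∈ 𝓕, ∀ ε > (0 : ℝ), ∃ Λ' ∈ 𝓕, Λ' ≠ Λ ∧ hausdorffDist Λ' Λ < ε) :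
    ∃ child : 𝓕 × Ioi (0 : ℝ) → Bool → 𝓕 × Ioi (0 : ℝ),
      (∀ p i, cthickening (child p i).2 ((child p i).1 : Set M) ⊆ cthickening p.2 (p.1 : Set M)) ∧
      ∀ p, Disjoint (cthickening (child p false).2 ((child p false).1 : Set M))
        (cthickening (child p true).2 ((child p true).1 : Set M)) := by
  choose Λ' hΛ' δ hδ hδr hsub hdisj' using
    fun p : 𝓕 × Ioi (0 : ℝ) => exists_mem_disjoint_cthickening hdisj hcpt hdense p.1.2 p.2.2
  refine ⟨fun p i => (bif i then ⟨Λ' p, hΛ' p⟩ else p.1, ⟨δ p, hδ p⟩), fun p i => ?_, hdisj'⟩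
  cases i
  exacts [cthickening_mono (hδr p) _, hsub p]

section CantorScheme

variable {α X : Type*} (child : α → Bool → α) (p₀ : α)

def cantorNode (a : ℕ → Bool) : ℕ → α
  | 0 => p₀
  | n + 1 => child (cantorNode a n) (a n)

theorem cantorNode_eq_of_forall_lt {a b : ℕ → Bool} {n : ℕ} (h : ∀ m < n, a m = b m) :
    cantorNode child p₀ a n = cantorNode child p₀ b n := by
  induction n with
  | zero => rfl
  | succ n ih =>
    simp only [cantorNode, ih fun m hm => h m (hm.trans n.lt_succ_self), h n n.lt_succ_self]

theorem antitone_cantorNode {D : α → Set X} (hD : ∀ p i, D (child p i) ⊆ D p) (a : ℕ → Bool) :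
    Antitone fun n => D (cantorNode child p₀ a n) :=
  antitone_nat_of_succ_le fun _ => hD _ _

theorem exists_disjoint_cantorNode {D : α → Set X}
    (hD : ∀ p, Disjoint (D (child p false)) (D (child p true))) {a b : ℕ → Bool} (hab : a ≠ b) :
    ∃ n, Disjoint (D (cantorNode child p₀ a n)) (D (cantorNode child p₀ b n)) := by
  have hex : ∃ n, a n ≠ b n := Function.ne_iff.1 hab
  refine ⟨Nat.find hex + 1, ?_⟩
  have hnode := cantorNode_eq_of_forall_lt child p₀ fun m hm => not_not.1 (Nat.find_min hex hm)
  simp only [cantorNode, hnode]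
  rw [Bool.eq_not_of_ne (Nat.find_spec hex).symm]
  cases a (Nat.find hex)
  exacts [hD _, (hD _).symm]

end CantorScheme

theorem continuum_of_minimal_sets_general
    {M : Type*} [MetricSpace M]
    (ϕ : Flow ℝ M) (A : Set M)
    (hdense : ∀ Λ ∈ CMinIn ϕ A, ∀ ε > (0 : ℝ),
      ∃ Λ' ∈ CMinIn ϕ A, Λ' ≠ Λ ∧ Metric.hausdorffDist Λ' Λ < ε)
    (Λ₀ : Set M) (hΛ₀ : Λ₀ ∈ CMinIn ϕ A) (ε₀ : ℝ) (hε₀ : 0 < ε₀)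
    (hball : IsCompact (Metric.cthickening ε₀ Λ₀))
    (hsub : Metric.cthickening ε₀ Λ₀ ⊆ A) :
    ∃ F : Set (Set M), Cardinal.mk F = Cardinal.continuum ∧
      F.Pairwise Disjoint ∧
      ∀ Λ ∈ F, Λ ∈ CMinIn ϕ A ∧ Λ ⊆ Metric.thickening ε₀ Λ₀ := by
  obtain ⟨child, hchild_sub, hchild_disj⟩ := exists_cthickening_child
    (fun Λ hΛ Λ' hΛ' hne => hΛ.2.1.disjoint_of_ne ϕ hΛ'.2.1 hne) (fun Λ hΛ => ⟨hΛ.1, hΛ.2.1.1⟩)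
    hdense
  let node := cantorNode child (⟨Λ₀, hΛ₀⟩, ⟨ε₀ / 2, half_pos hε₀⟩)
  let D : CMinIn ϕ A × Ioi (0 : ℝ) → Set M := fun p => cthickening p.2 p.1
  have hnode : ∀ a n, cthickening (node a n).2 (node a n).1 ⊆ thickening ε₀ Λ₀ := fun a n =>
    (antitone_cantorNode child _ (D := D) hchild_sub a n.zero_le).trans
      (cthickening_subset_thickening' hε₀ (half_lt_self hε₀) Λ₀)
  choose f hfnode hf using fun a => exists_isMinimalSet_subset_iInter ϕ
    (antitone_cantorNode child _ (D := D) hchild_sub a)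
    (fun n => hball.of_isClosed_subset isClosed_cthickening
      ((hnode a n).trans (thickening_subset_cthickening _ _)))
    (fun n => have hmin := (node a n).1.2.2.1
      ⟨_, self_subset_cthickening _, hmin.1, hmin.2.2.1⟩)
  have hfdisj : Pairwise fun a b => Disjoint (f a) (f b) := fun a b hab =>
    have ⟨n, hn⟩ := exists_disjoint_cantorNode child _ (D := D) hchild_disj hab
    hn.mono ((hfnode a).trans (iInter_subset _ n)) ((hfnode b).trans (iInter_subset _ n))
  have hfinj : f.Injective := pairwise_ne_iff_injective.1 fun a b hab =>
    (hfdisj hab).ne (hf a).1.ne_empty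
  refine ⟨range f, ?_, hfdisj.range_pairwise, ?_⟩
  · simpa using Cardinal.mk_range_eq_of_injective hfinj
  · rintro _ ⟨a, rfl⟩
    have hfa : f a ⊆ thickening ε₀ Λ₀ := (hfnode a).trans ((iInter_subset _ 0).trans (hnode a 0))
    refine ⟨⟨hball.of_isClosed_subset (hf a).2.1 (hfa.trans (thickening_subset_cthickening _ _)),
      hf a, hfa.trans ((thickening_subset_cthickening _ _).trans hsub)⟩, hfa⟩

theorem continuum_of_minimal_sets
    {M : Type*} [MetricSpace M] [LocallyCompactSpace M]
    (ϕ : Flow ℝ M) (A : Set M) (hA : IsOpen A)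
    (hne : (CMinIn ϕ A).Nonempty)
    (hdense : ∀ Λ ∈ CMinIn ϕ A, ∀ ε > (0 : ℝ),
      ∃ Λ' ∈ CMinIn ϕ A, Λ' ≠ Λ ∧ Metric.hausdorffDist Λ' Λ < ε)
    (Λ₀ : Set M) (hΛ₀ : Λ₀ ∈ CMinIn ϕ A) (ε₀ : ℝ) (hε₀ : 0 < ε₀)
    (hball : IsCompact (Metric.cthickening ε₀ Λ₀))
    (hsub : Metric.cthickening ε₀ Λ₀ ⊆ A) :
    ∃ F : Set (Set M), Cardinal.mk F = Cardinal.continuum ∧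
      F.Pairwise Disjoint ∧
      ∀ Λ ∈ F, Λ ∈ CMinIn ϕ A ∧ Λ ⊆ Metric.thickening ε₀ Λ₀ :=
  continuum_of_minimal_sets_general ϕ A hdense Λ₀ hΛ₀ ε₀ hε₀ hball hsub
end

section
/- The Continuum Hypothesis implies: if L is an uncountable separable metric space, then there exists a countable (possibly empty) set J ⊆ L such that D := L \ J is nonempty and every open ball around every point of D contains continuum-many points of D. -/
/-!
A second countable T₀ space embeds into the power set of a countable basis, so it has at most
`2 ^ ℵ₀` points; under CH every uncountable subset of `L` therefore has exactly `2 ^ ℵ₀` points.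
Take `J` to be the set of points having a countable neighbourhood. By the Lindelöf property `J` is
countable, so every neighbourhood of a point outside `J`, being uncountable, still has uncountably
many points outside `J`.
-/

open Set Metric TopologicalSpace

open Cardinal in
lemma Cardinal.eq_continuum_of_aleph0_lt_of_le_continuum
    (hCH : ¬ ∃ c : Cardinal.{v}, ℵ₀ < c ∧ c < 𝔠) {c : Cardinal.{u}} (h₁ : ℵ₀ < c) (h₂ : c ≤ 𝔠) :
    c = 𝔠 := by
  refine h₂.eq_of_not_lt fun hlt => hCH ?_
  -- `c < 𝔠` makes `c` small, so it can be moved to universe `v`.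
  obtain ⟨c₀, rfl⟩ : ∃ c₀ : Cardinal.{0}, lift.{u} c₀ = c :=
    mem_range_lift_of_le (hlt.le.trans_eq lift_continuum.symm)
  exact ⟨lift.{v} c₀, by simpa using h₁, by simpa using hlt⟩

open Cardinal in
lemma TopologicalSpace.IsTopologicalBasis.mk_le_two_power {X : Type*} [TopologicalSpace X]
    [T0Space X] {B : Set (Set X)} (hB : IsTopologicalBasis B) : #X ≤ 2 ^ #B := by
  refine (mk_le_of_injective (f := fun x => {s : B | x ∈ (s : Set X)}) fun x y hxy => ?_).trans_eq
    mk_set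
  have hB_iff : ∀ s : B, x ∈ (s : Set X) ↔ y ∈ (s : Set X) := fun s => Set.ext_iff.1 hxy s
  refine Inseparable.eq (inseparable_iff_forall_isOpen.2 fun U hU => ⟨fun hx => ?_, fun hy => ?_⟩)
  · obtain ⟨s, hsB, hxs, hsU⟩ := hB.exists_subset_of_mem_open hx hU
    exact hsU ((hB_iff ⟨s, hsB⟩).1 hxs)
  · obtain ⟨s, hsB, hys, hsU⟩ := hB.exists_subset_of_mem_open hy hU
    exact hsU ((hB_iff ⟨s, hsB⟩).2 hys)

open Cardinal in
lemma Cardinal.mk_le_continuum_of_secondCountable (X : Type*) [TopologicalSpace X] [T0Space X]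
    [SecondCountableTopology X] : #X ≤ 𝔠 := by
  obtain ⟨B, hBc, -, hB⟩ := exists_countable_basis X
  calc #X ≤ 2 ^ #B := hB.mk_le_two_power
    _ ≤ 2 ^ ℵ₀ := power_le_power_left two_ne_zero hBc.le_aleph0
    _ = 𝔠 := two_power_aleph0

section Condensation

open Filter Topology

variable {X : Type*} [TopologicalSpace X]

variable (X) in
def nonCondensationPoints : Set X :=
  {x | ∃ U ∈ 𝓝 x, U.Countable}

variable [SecondCountableTopology X]

lemma countable_nonCondensationPoints : (nonCondensationPoints X).Countable := by
  choose! U hU hUc using fun x (hx : x ∈ nonCondensationPoints X) => hx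
  obtain ⟨t, htJ, htc, hJt⟩ :=
    countable_cover_nhdsWithin fun x hx => mem_nhdsWithin_of_mem_nhds (hU x hx)
  exact (htc.biUnion fun x hx => hUc x (htJ hx)).mono hJt

lemma not_countable_inter_compl_nonCondensationPoints {x : X}
    (hx : x ∉ nonCondensationPoints X) {U : Set X} (hU : U ∈ 𝓝 x) :
    ¬ (U ∩ (nonCondensationPoints X)ᶜ).Countable := fun h =>
  hx ⟨U, hU, (h.union countable_nonCondensationPoints).mono (subset_sdiff_union U _)⟩

end Condensation

theorem CH_implies_cDH
    (hCH : ¬ ∃ c : Cardinal, Cardinal.aleph0 < c ∧ c < Cardinal.continuum)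
    (L : Type*) [MetricSpace L] [SeparableSpace L] (hL : ¬ Countable L) :
    ∃ J : Set L, J.Countable ∧ Jᶜ.Nonempty ∧
      ∀ x ∈ Jᶜ, ∀ ε > (0 : ℝ),
        Cardinal.mk ↥(Metric.ball x ε ∩ Jᶜ) = Cardinal.continuum := by
  have : SecondCountableTopology L := UniformSpace.secondCountable_of_separable L
  have hJ : (nonCondensationPoints L).Countable := countable_nonCondensationPoints
  refine ⟨_, hJ, nonempty_compl.2 fun h => hL (countable_univ_iff.1 (h ▸ hJ)), ?_⟩
  intro x hx ε hε
  refine Cardinal.eq_continuum_of_aleph0_lt_of_le_continuum hCH ?_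
    ((Cardinal.mk_set_le _).trans (Cardinal.mk_le_continuum_of_secondCountable L))
  rw [← not_le, Cardinal.le_aleph0_iff_set_countable]
  exact not_countable_inter_compl_nonCondensationPoints hx (ball_mem_nhds x hε)
end
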